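/- Let (t, ε) be a signed Schröder tree, let I be a subset of the set of leaves of t (identified with a subset of [|t|] via the canonical left-to-right labeling), and let (t_I, ε_I) be the induced signed subtree. Then pat_I(perm(t, ε)) = perm(t_I, ε_I); that is, the pattern of the permutation of the tree induced by the leaves in I equals the permutation of the induced subtree. -/

import Mathlib

/-!
Both sides are computed by recursion on the tree. The positions `I` in a direct sum `π ⊕ σ`
split into positions inside `π` and (shifted) positions inside `σ`; as every value of `π` lies
below every value of `σ`, standardizing the selected entries gives `pat(π) ⊕ pat(σ)`, and
dually for skew sums. Children containing no selected leaf contribute the empty pattern and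
disappear, and a vertex left with a single child may be contracted, since a sum with one summand
is that summand: this is exactly the recursion defining the induced subtree.
-/

/-- Signed plane trees: a leaf, or an internal vertex carrying a sign
(`true` = `+`, `false` = `-`) with an ordered list of subtrees. -/
inductive STree where
  | leaf : STree
  | node : Bool → List STree → STree

/-- Number of leaves. -/
def STree.nleaves : STree → ℕ
  | .leaf => 1
  | .node _ cs => (cs.attach.map (fun c => STree.nleaves c.1)).sum
decreasing_by simp_wf; have := List.sizeOf_lt_of_mem c.2; omega

/-- Direct sum of two permutations in one-line notation. -/
def oplus (a b : List ℕ) : List ℕ := a ++ b.map (· + a.length)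

/-- Skew sum of two permutations in one-line notation. -/
def ominus (a b : List ℕ) : List ℕ := a.map (· + b.length) ++ b

/-- The permutation (in one-line notation, values `1,…,n`) associated with a signed tree:
a leaf gives `[1]`; a `+`-signed vertex gives the direct sum of its children's permutations,
a `-`-signed vertex their skew sum. -/
def STree.permOf : STree → List ℕ
  | .leaf => [1]
  | .node s cs => (cs.attach.map (fun c => STree.permOf c.1)).foldr
      (if s then oplus else ominus) []
decreasing_by simp_wf; have := List.sizeOf_lt_of_mem c.2; omega

/-- Subsequence of a list given by a set of (0-indexed) positions. -/
def subseqAt (l : List ℕ) (I : Finset ℕ) : List ℕ :=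
  ((List.range l.length).filter (· ∈ I)).map (fun i => l.getD i 0)

/-- Standardization of a list of distinct values: each value is replaced by its rank
(1-indexed) among the values of the list. -/
def List.std (l : List ℕ) : List ℕ := l.map (fun x => (l.filter (· < x)).length + 1)

/-- The pattern of the permutation `l` (one-line notation) induced by the set `I`
of (0-indexed) positions. -/
def patL (l : List ℕ) (I : Finset ℕ) : List ℕ := (subseqAt l I).std

mutual
/-- The (signed) subtree of a signed tree induced by a set `I` of (0-indexed) leaves:
its leaves are the elements of `I`, its internal vertices are the common ancestors of
pairs of leaves in `I`, with inherited ancestor relation, child order and signs. -/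
def STree.induced : STree → Finset ℕ → STree
  | .leaf, _ => .leaf
  | .node s cs, I =>
      match STree.inducedList cs I with
      | [t] => t
      | ts => .node s ts

/-- Helper: induced subtrees of the children containing at least one selected leaf,
where leaves are indexed from left to right across the whole forest. -/
def STree.inducedList : List STree → Finset ℕ → List STree
  | [], _ => []
  | c :: rest, I =>
      (if (I.filter (· < c.nleaves)).Nonempty
        then [STree.induced c (I.filter (· < c.nleaves))] else []) ++
      STree.inducedList rest ((I.filter (c.nleaves ≤ ·)).image (· - c.nleaves))
end

namespace List

theorem std_map_add (l : List ℕ) (c : ℕ) : (l.map (· + c)).std = l.std := by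
  simp [List.std, List.filter_map, Function.comp_def]

theorem std_append_of_lt {x y : List ℕ} (h : ∀ u ∈ x, ∀ v ∈ y, u < v) :
    (x ++ y).std = oplus x.std y.std := by
  have hy : ∀ a ∈ x, y.filter (· < a) = [] := fun a ha =>
    filter_eq_nil_iff.2 fun v hv => by simpa using (h a ha v hv).le
  have hx : ∀ a ∈ y, x.filter (· < a) = x := fun a ha =>
    filter_eq_self.2 fun u hu => by simpa using h u hu a ha
  simp only [std, oplus, map_append, filter_append, length_map, map_map]
  congr 1
  · exact map_congr_left fun a ha => by simp [hy a ha]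
  · exact map_congr_left fun a ha => by simp [hx a ha]; omega

theorem std_append_of_gt {x y : List ℕ} (h : ∀ u ∈ x, ∀ v ∈ y, v < u) :
    (x ++ y).std = ominus x.std y.std := by
  have hy : ∀ a ∈ x, y.filter (· < a) = y := fun a ha =>
    filter_eq_self.2 fun v hv => by simpa using h a ha v hv
  have hx : ∀ a ∈ y, x.filter (· < a) = [] := fun a ha =>
    filter_eq_nil_iff.2 fun u hu => by simpa using (h u hu a ha).le
  simp only [std, ominus, map_append, filter_append, length_map, map_map]
  congr 1
  · exact map_congr_left fun a ha => by simp [hy a ha]; omega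
  · exact map_congr_left fun a ha => by simp [hx a ha]

end List

theorem mem_of_mem_subseqAt {l : List ℕ} {I : Finset ℕ} {x : ℕ} (hx : x ∈ subseqAt l I) :
    x ∈ l := by
  simp only [subseqAt, List.mem_map, List.mem_filter, List.mem_range] at hx
  obtain ⟨i, ⟨hi, -⟩, rfl⟩ := hx
  rw [List.getD_eq_getElem _ _ hi]
  exact List.getElem_mem hi

theorem subseqAt_map_add (l : List ℕ) (c : ℕ) (I : Finset ℕ) :
    subseqAt (l.map (· + c)) I = (subseqAt l I).map (· + c) := by
  simp only [subseqAt, List.length_map, List.map_map]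
  refine List.map_congr_left fun i hi => ?_
  simp only [List.mem_filter, List.mem_range] at hi
  simp [List.getElem?_eq_getElem hi.1]

theorem subseqAt_append (a b : List ℕ) (I : Finset ℕ) :
    subseqAt (a ++ b) I =
      subseqAt a (I.filter (· < a.length)) ++
      subseqAt b ((I.filter (a.length ≤ ·)).image (· - a.length)) := by
  simp only [subseqAt, List.length_append, List.range_add, List.filter_append, List.map_append,
    List.filter_map, List.map_map]
  congr 1
  · rw [List.filter_congr (q := (· ∈ I.filter (· < a.length))) fun i hi => by
      simp_all [List.mem_range]]
    refine List.map_congr_left fun i hi => ?_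
    simp only [List.mem_filter, List.mem_range] at hi
    simp [List.getElem?_append_left hi.1, List.getElem?_eq_getElem hi.1]
  · rw [List.filter_congr (q := (· ∈ (I.filter (a.length ≤ ·)).image (· - a.length)))
      fun i hi => by
        simp only [Function.comp, decide_eq_decide, Finset.mem_image, Finset.mem_filter]
        exact ⟨fun h => ⟨_, ⟨h, by omega⟩, by omega⟩,
          by rintro ⟨j, ⟨hj, hja⟩, rfl⟩; rwa [Nat.add_sub_cancel' hja]⟩]
    refine List.map_congr_left fun i hi => ?_
    simp only [List.mem_filter, List.mem_range] at hi
    simp [List.getElem?_append_right]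

theorem patL_empty (l : List ℕ) : patL l ∅ = [] := by
  simp [patL, subseqAt, List.std]

/-- Weaker than being a permutation of `1, …, length`, but enough to separate the values of the
two summands of a direct or skew sum. -/
def ValuesInRange (l : List ℕ) : Prop := ∀ x ∈ l, 1 ≤ x ∧ x ≤ l.length

theorem patL_oplus {a b : List ℕ} (ha : ValuesInRange a) (hb : ValuesInRange b) (I : Finset ℕ) :
    patL (oplus a b) I = oplus (patL a (I.filter (· < a.length)))
      (patL b ((I.filter (a.length ≤ ·)).image (· - a.length))) := by
  rw [patL, oplus, subseqAt_append, subseqAt_map_add, List.std_append_of_lt, List.std_map_add]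
  · rfl
  intro u hu v hv
  obtain ⟨w, hw, rfl⟩ := List.mem_map.1 hv
  have := (ha u (mem_of_mem_subseqAt hu)).2
  have := (hb w (mem_of_mem_subseqAt hw)).1
  omega

theorem patL_ominus {a b : List ℕ} (ha : ValuesInRange a) (hb : ValuesInRange b) (I : Finset ℕ) :
    patL (ominus a b) I = ominus (patL a (I.filter (· < a.length)))
      (patL b ((I.filter (a.length ≤ ·)).image (· - a.length))) := by
  rw [patL, ominus, subseqAt_append, List.length_map, subseqAt_map_add, List.std_append_of_gt,
    List.std_map_add]
  · rfl
  intro u hu v hv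
  obtain ⟨w, hw, rfl⟩ := List.mem_map.1 hu
  have := (ha w (mem_of_mem_subseqAt hw)).1
  have := (hb v (mem_of_mem_subseqAt hv)).2
  omega

theorem valuesInRange_oplus {a b : List ℕ} (ha : ValuesInRange a) (hb : ValuesInRange b) :
    ValuesInRange (oplus a b) := by
  intro x hx
  simp only [oplus, List.mem_append, List.mem_map, List.length_append, List.length_map] at hx ⊢
  rcases hx with hx | ⟨y, hy, rfl⟩
  · have := ha x hx; omega
  · have := hb y hy; omega

theorem valuesInRange_ominus {a b : List ℕ} (ha : ValuesInRange a) (hb : ValuesInRange b) :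
    ValuesInRange (ominus a b) := by
  intro x hx
  simp only [ominus, List.mem_append, List.mem_map, List.length_append, List.length_map] at hx ⊢
  rcases hx with ⟨y, hy, rfl⟩ | hx
  · have := ha y hy; omega
  · have := hb x hx; omega

def signedSum (s : Bool) : List ℕ → List ℕ → List ℕ := if s then oplus else ominus

theorem length_signedSum (s : Bool) (a b : List ℕ) :
    (signedSum s a b).length = a.length + b.length := by
  cases s <;> simp [signedSum, oplus, ominus]

theorem signedSum_nil_left (s : Bool) (b : List ℕ) : signedSum s [] b = b := by
  cases s <;> simp [signedSum, oplus, ominus]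

theorem signedSum_nil_right (s : Bool) (a : List ℕ) : signedSum s a [] = a := by
  cases s <;> simp [signedSum, oplus, ominus]

theorem valuesInRange_signedSum (s : Bool) {a b : List ℕ} (ha : ValuesInRange a)
    (hb : ValuesInRange b) : ValuesInRange (signedSum s a b) := by
  cases s
  · exact valuesInRange_ominus ha hb
  · exact valuesInRange_oplus ha hb

theorem patL_signedSum (s : Bool) {a b : List ℕ} (ha : ValuesInRange a) (hb : ValuesInRange b)
    (I : Finset ℕ) :
    patL (signedSum s a b) I = signedSum s (patL a (I.filter (· < a.length)))
      (patL b ((I.filter (a.length ≤ ·)).image (· - a.length))) := by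
  cases s
  · exact patL_ominus ha hb I
  · exact patL_oplus ha hb I

theorem length_foldr_signedSum (s : Bool) (ls : List (List ℕ)) :
    (ls.foldr (signedSum s) []).length = (ls.map List.length).sum := by
  induction ls with
  | nil => rfl
  | cons l ls ih => simp [length_signedSum, ih]

theorem valuesInRange_foldr_signedSum (s : Bool) {ls : List (List ℕ)}
    (h : ∀ l ∈ ls, ValuesInRange l) : ValuesInRange (ls.foldr (signedSum s) []) := by
  induction ls with
  | nil => simp [ValuesInRange]
  | cons l ls ih =>
    simp only [List.mem_cons, forall_eq_or_imp] at h
    exact valuesInRange_signedSum s h.1 (ih h.2)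

namespace STree

@[induction_eliminator]
theorem induction {motive : STree → Prop} (leaf : motive .leaf)
    (node : ∀ s cs, (∀ c ∈ cs, motive c) → motive (.node s cs)) : ∀ t, motive t
  | .leaf => leaf
  | .node s cs => node s cs fun c _ => induction leaf node c

theorem permOf_node (s : Bool) (cs : List STree) :
    (node s cs).permOf = (cs.map permOf).foldr (signedSum s) [] := by
  rw [permOf, List.attach_map_val (f := permOf)]
  rfl

theorem nleaves_node (s : Bool) (cs : List STree) :
    (node s cs).nleaves = (cs.map nleaves).sum := by
  rw [nleaves, List.attach_map_val (f := nleaves)]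

theorem length_permOf (t : STree) : t.permOf.length = t.nleaves := by
  induction t with
  | leaf => simp [permOf, nleaves]
  | node s cs ih =>
    rw [permOf_node, nleaves_node, length_foldr_signedSum, List.map_map]
    exact congrArg List.sum (List.map_congr_left ih)

theorem valuesInRange_permOf (t : STree) : ValuesInRange t.permOf := by
  induction t with
  | leaf => simp [ValuesInRange, permOf]
  | node s cs ih =>
    rw [permOf_node]
    exact valuesInRange_foldr_signedSum s (List.forall_mem_map.2 ih)

theorem permOf_induced_node (s : Bool) (cs : List STree) (I : Finset ℕ) :
    ((node s cs).induced I).permOf = ((inducedList cs I).map permOf).foldr (signedSum s) [] := by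
  rw [induced]
  rcases inducedList cs I with _ | ⟨t, _ | ⟨t', ts⟩⟩
  · exact permOf_node s []
  · simp [signedSum_nil_right]
  · exact permOf_node s _

theorem patL_foldr_permOf (s : Bool) (cs : List STree)
    (ih : ∀ c ∈ cs, ∀ J : Finset ℕ, (∀ x ∈ J, x < c.nleaves) → J.Nonempty →
      patL c.permOf J = (c.induced J).permOf) (I : Finset ℕ) :
    patL ((cs.map permOf).foldr (signedSum s) []) I =
      ((inducedList cs I).map permOf).foldr (signedSum s) [] := by
  induction cs generalizing I with
  | nil => simp [inducedList, patL, subseqAt, List.std]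
  | cons c cs ihs =>
    simp only [List.mem_cons, forall_eq_or_imp] at ih
    rw [List.map_cons, List.foldr_cons, patL_signedSum s (valuesInRange_permOf c)
      (valuesInRange_foldr_signedSum s (List.forall_mem_map.2 fun c _ => valuesInRange_permOf c)),
      length_permOf, inducedList, ihs ih.2]
    by_cases hc : (I.filter (· < c.nleaves)).Nonempty
    · rw [ih.1 _ (fun x hx => (Finset.mem_filter.1 hx).2) hc]
      simp [hc]
    · rw [Finset.not_nonempty_iff_eq_empty.1 hc, patL_empty, signedSum_nil_left]
      simp

end STree

/-- For a signed Schröder tree `t` (with signs) and a nonempty subset `I` of its leaves,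
the pattern of `perm t` at the positions `I` equals the permutation associated with
the induced signed subtree: `pat_I (perm t) = perm (t_I)`. -/
theorem pat_perm_eq_perm_induced (t : STree) (I : Finset ℕ)
    (hI : ∀ x ∈ I, x < t.nleaves) (hne : I.Nonempty) :
    patL t.permOf I = (t.induced I).permOf := by
  induction t generalizing I with
  | leaf =>
    obtain ⟨x, hx⟩ := hne
    have hx0 : 0 ∈ I := by
      have : x < 1 := by simpa [STree.nleaves] using hI x hx
      rwa [Nat.lt_one_iff.1 this] at hx
    simp [STree.induced, STree.permOf, patL, subseqAt, List.std, hx0]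
  | node s cs ih =>
    rw [STree.permOf_node, STree.permOf_induced_node]
    exact STree.patL_foldr_permOf s cs ih I
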